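/- arXiv:2503.00850 — 7 statements merged into one kernel-verified Lean document; each statement's English description precedes it below -/
import Mathlib

section
/- Let θ ∈ K̄ be algebraic of degree n over K and let δ ∈ D_m(θ) for some 1 ≤ m ≤ n. Then deg_K B(θ, δ) ≤ m, and equality holds if and only if m = 1 or δ > γ for every γ ∈ D_k(θ) and every k < m. -/
/-- The set of distances `D_m(θ) = {v(θ - b) : b ∈ K̄, deg_K b = m}`. -/
def distSet (K : Type*) {Kbar Γ : Type*} [Field K] [Field Kbar] [Algebra K Kbar]
    [AddCommGroup Γ] [LinearOrder Γ] [IsOrderedAddMonoid Γ] (v : Kbar → WithTop Γ) (θ : Kbar) (m : ℕ) :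
    Set (WithTop Γ) :=
  {δ : WithTop Γ | ∃ b : Kbar, (minpoly K b).natDegree = m ∧ δ = v (θ - b)}

/-- The closed ball `B(θ, δ) = {a ∈ K̄ : v(θ - a) ≥ δ}`. -/
def closedBall {Kbar Γ : Type*} [Field Kbar] [AddCommGroup Γ] [LinearOrder Γ] [IsOrderedAddMonoid Γ]
    (v : Kbar → WithTop Γ) (θ : Kbar) (δ : WithTop Γ) : Set Kbar :=
  {a : Kbar | δ ≤ v (θ - a)}

/-- The degree `deg_K B(θ, δ) = min {deg_K a : a ∈ B(θ, δ)}`. -/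
noncomputable def ballDeg (K : Type*) {Kbar Γ : Type*} [Field K] [Field Kbar]
    [Algebra K Kbar] [AddCommGroup Γ] [LinearOrder Γ] [IsOrderedAddMonoid Γ]
    (v : Kbar → WithTop Γ) (θ : Kbar) (δ : WithTop Γ) : ℕ :=
  sInf ((fun a : Kbar => (minpoly K a).natDegree) '' closedBall v θ δ)

/-!
An element `b` of degree `m` with `v (θ - b) = δ` lies in `B(θ, δ)`, so `deg B(θ, δ) ≤ m`. The
degree drops below `m` exactly when some `c` of degree `k < m` satisfies `δ ≤ v (θ - c)`, that is,
when `δ` is bounded by a distance in some `D_k(θ)` with `k < m`. The alternative `m = 1` is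
subsumed by the second one, since `D_0(θ)` is empty: minimal polynomials of algebraic elements
have positive degree.
-/

section

variable {K Kbar Γ : Type*} [Field K] [Field Kbar] [Algebra K Kbar]
  [AddCommGroup Γ] [LinearOrder Γ] [IsOrderedAddMonoid Γ]
  {v : Kbar → WithTop Γ} {θ : Kbar} {δ : WithTop Γ}

theorem mem_closedBall_of_mem_distSet {m : ℕ} (hδ : δ ∈ distSet K v θ m) :
    ∃ b ∈ closedBall v θ δ, (minpoly K b).natDegree = m := by
  obtain ⟨b, hb, rfl⟩ := hδ
  exact ⟨b, le_refl (v (θ - b)), hb⟩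

theorem ballDeg_le_natDegree {a : Kbar} (ha : a ∈ closedBall v θ δ) :
    ballDeg K v θ δ ≤ (minpoly K a).natDegree :=
  Nat.sInf_le ⟨a, ha, rfl⟩

theorem ballDeg_lt_iff (hball : (closedBall v θ δ).Nonempty) {m : ℕ} :
    ballDeg K v θ δ < m ↔ ∃ k < m, ∃ γ ∈ distSet K v θ k, δ ≤ γ := by
  constructor
  · intro hlt
    obtain ⟨a, ha, hdeg⟩ := Nat.sInf_mem (hball.image fun a => (minpoly K a).natDegree)
    exact ⟨(minpoly K a).natDegree, hdeg.trans_lt hlt, v (θ - a), ⟨a, rfl, rfl⟩, ha⟩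
  · rintro ⟨k, hk, γ, ⟨c, hc, rfl⟩, hδγ⟩
    exact (hc ▸ ballDeg_le_natDegree hδγ).trans_lt hk

theorem distSet_zero [Algebra.IsIntegral K Kbar] : distSet K v θ 0 = ∅ :=
  Set.eq_empty_of_forall_notMem fun _ ⟨b, hb, _⟩ =>
    (minpoly.natDegree_pos (Algebra.IsIntegral.isIntegral (R := K) b)).ne' hb

end

theorem ballDeg_le_of_mem_distSet_general {K Kbar Γ : Type*} [Field K] [Field Kbar] [Algebra K Kbar]
    [IsAlgClosure K Kbar] [AddCommGroup Γ] [LinearOrder Γ] [IsOrderedAddMonoid Γ]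
    (v : Kbar → WithTop Γ)
    (θ : Kbar)
    (m : ℕ)
    (δ : WithTop Γ) (hδ : δ ∈ distSet K v θ m) :
    ballDeg K v θ δ ≤ m ∧
      (ballDeg K v θ δ = m ↔
        m = 1 ∨ ∀ k < m, ∀ γ ∈ distSet K v θ k, γ < δ) := by
  have : Algebra.IsIntegral K Kbar := (IsAlgClosure.isAlgebraic (R := K)).isIntegral
  obtain ⟨b, hb, hbdeg⟩ := mem_closedBall_of_mem_distSet hδ
  have hle : ballDeg K v θ δ ≤ m := hbdeg ▸ ballDeg_le_natDegree hb
  have heq_iff : ballDeg K v θ δ = m ↔ ∀ k < m, ∀ γ ∈ distSet K v θ k, γ < δ := by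
    rw [← not_iff_not, ← Ne, ← hle.lt_iff_ne, ballDeg_lt_iff ⟨b, hb⟩]
    push Not
    rfl
  refine ⟨hle, heq_iff.trans (or_iff_right_of_imp ?_).symm⟩
  rintro rfl k hk
  rw [Nat.lt_one_iff.mp hk, distSet_zero]
  exact fun _ => False.elim

/-- If `δ ∈ D_m(θ)` with `1 ≤ m ≤ n = deg_K θ`, then `deg_K B(θ,δ) ≤ m`, with equality iff
`m = 1` or `δ > γ` for every `γ ∈ D_k(θ)` and every `k < m`. -/
theorem ballDeg_le_of_mem_distSet {K Kbar Γ : Type*} [Field K] [Field Kbar] [Algebra K Kbar]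
    [IsAlgClosure K Kbar] [AddCommGroup Γ] [LinearOrder Γ] [IsOrderedAddMonoid Γ]
    (v : Kbar → WithTop Γ)
    (hv0 : ∀ x : Kbar, v x = ⊤ ↔ x = 0)
    (hvmul : ∀ x y : Kbar, v (x * y) = v x + v y)
    (hvadd : ∀ x y : Kbar, min (v x) (v y) ≤ v (x + y))
    (θ : Kbar) (n : ℕ) (hn : (minpoly K θ).natDegree = n)
    (m : ℕ) (hm1 : 1 ≤ m) (hmn : m ≤ n)
    (δ : WithTop Γ) (hδ : δ ∈ distSet K v θ m) :
    ballDeg K v θ δ ≤ m ∧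
      (ballDeg K v θ δ = m ↔
        m = 1 ∨ ∀ k < m, ∀ γ ∈ distSet K v θ k, γ < δ) :=
  ballDeg_le_of_mem_distSet_general v θ m δ hδ
end

section
/- Let θ ∈ K̄ be algebraic of degree n over K and let 1 ≤ m ≤ n. There exists δ ∈ Γ ∪ {∞} with deg_K B(θ, δ) = m if and only if m = 1 or there exists ε ∈ D_m(θ) such that ε > γ for every γ ∈ D_k(θ) and every k < m. (That is, the set of degrees of closed ultrametric balls centered at θ coincides with the canonical sequence of minimal degrees of the distances of θ.) -/
/-!
The statement is order-theoretic: for any `deg : α → ℕ` and `d : α → β`, a nonzero `m` is the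
least degree on some superlevel set `{a | δ ≤ d a}` exactly when some `b` of degree `m` is
strictly closer than every element of smaller degree, and then `δ = d b` works. For `m = 1` such
a `b` is `0`, since every element of `K̄` is algebraic and so has degree at least `1`.
-/

theorem exists_sInf_image_superlevel_eq_iff {α β : Type*} [LinearOrder β] (deg : α → ℕ)
    (d : α → β) {m : ℕ} (hm : m ≠ 0) :
    (∃ δ, sInf (deg '' {a | δ ≤ d a}) = m) ↔ ∃ b, deg b = m ∧ ∀ a, deg a < m → d a < d b := by
  constructor
  · rintro ⟨δ, hδ⟩
    have hne : (deg '' {a | δ ≤ d a}).Nonempty := by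
      by_contra hempty
      rw [Set.not_nonempty_iff_eq_empty.mp hempty, Nat.sInf_empty] at hδ
      exact hm hδ.symm
    obtain ⟨b, hb, hbdeg⟩ := Nat.sInf_mem hne
    refine ⟨b, hbdeg.trans hδ, fun a ha => lt_of_not_ge fun hab => ?_⟩
    have : sInf (deg '' {a | δ ≤ d a}) ≤ deg a := Nat.sInf_le ⟨a, le_trans hb hab, rfl⟩
    omega
  · rintro ⟨b, hbm, hb⟩
    have hmem : m ∈ deg '' {a | d b ≤ d a} := ⟨b, le_rfl, hbm⟩
    refine ⟨d b, le_antisymm (Nat.sInf_le hmem) ?_⟩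
    obtain ⟨a, ha, hadeg⟩ := Nat.sInf_mem ⟨m, hmem⟩
    rw [← hadeg]
    exact le_of_not_gt fun hlt => (hb a hlt).not_ge ha

theorem exists_distSet_forall_lt_iff (K : Type*) {Kbar Γ : Type*} [Field K] [Field Kbar]
    [Algebra K Kbar] [AddCommGroup Γ] [LinearOrder Γ] [IsOrderedAddMonoid Γ]
    (v : Kbar → WithTop Γ) (θ : Kbar) (m : ℕ) :
    (∃ ε ∈ distSet K v θ m, ∀ k < m, ∀ γ ∈ distSet K v θ k, γ < ε) ↔
      ∃ b : Kbar, (minpoly K b).natDegree = m ∧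
        ∀ a : Kbar, (minpoly K a).natDegree < m → v (θ - a) < v (θ - b) := by
  constructor
  · rintro ⟨ε, hε, hb⟩
    obtain ⟨b, hbm, rfl⟩ := hε
    exact ⟨b, hbm, fun a ha => hb _ ha _ ⟨a, rfl, rfl⟩⟩
  · rintro ⟨b, hbm, hb⟩
    refine ⟨_, ⟨b, hbm, rfl⟩, fun k hk γ hγ => ?_⟩
    obtain ⟨a, rfl, rfl⟩ := hγ
    exact hb a hk

theorem exists_ball_of_deg_iff_general {K Kbar Γ : Type*} [Field K] [Field Kbar] [Algebra K Kbar]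
    [IsAlgClosure K Kbar] [AddCommGroup Γ] [LinearOrder Γ] [IsOrderedAddMonoid Γ]
    (v : Kbar → WithTop Γ)
    (θ : Kbar)
    (m : ℕ) (hm1 : 1 ≤ m) :
    (∃ δ : WithTop Γ, ballDeg K v θ δ = m) ↔
      (m = 1 ∨ ∃ ε ∈ distSet K v θ m, ∀ k < m, ∀ γ ∈ distSet K v θ k, γ < ε) := by
  have : Algebra.IsAlgebraic K Kbar := IsAlgClosure.isAlgebraic
  simp only [ballDeg, closedBall]
  rw [exists_distSet_forall_lt_iff, exists_sInf_image_superlevel_eq_iff _ _ (by omega : m ≠ 0)]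
  refine ⟨Or.inr, ?_⟩
  rintro (rfl | h)
  · refine ⟨0, by simp [minpoly.zero], fun a ha => ?_⟩
    have := minpoly.natDegree_pos (Algebra.IsIntegral.isIntegral (R := K) a)
    omega
  · exact h

/-- For `1 ≤ m ≤ n = deg_K θ`: there is a closed ball centered at `θ` of degree `m` over `K`
iff `m = 1` or some `ε ∈ D_m(θ)` satisfies `ε > γ` for every `γ ∈ D_k(θ)`, `k < m`. -/
theorem exists_ball_of_deg_iff {K Kbar Γ : Type*} [Field K] [Field Kbar] [Algebra K Kbar]
    [IsAlgClosure K Kbar] [AddCommGroup Γ] [LinearOrder Γ] [IsOrderedAddMonoid Γ]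
    (v : Kbar → WithTop Γ)
    (hv0 : ∀ x : Kbar, v x = ⊤ ↔ x = 0)
    (hvmul : ∀ x y : Kbar, v (x * y) = v x + v y)
    (hvadd : ∀ x y : Kbar, min (v x) (v y) ≤ v (x + y))
    (θ : Kbar) (n : ℕ) (hn : (minpoly K θ).natDegree = n)
    (m : ℕ) (hm1 : 1 ≤ m) (hmn : m ≤ n) :
    (∃ δ : WithTop Γ, ballDeg K v θ δ = m) ↔
      (m = 1 ∨ ∃ ε ∈ distSet K v θ m, ∀ k < m, ∀ γ ∈ distSet K v θ k, γ < ε) :=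
  exists_ball_of_deg_iff_general v θ m hm1
end

section
/- Let θ ∈ K̄ be algebraic of degree n over K and let 1 ≤ m < n be such that some ε ∈ D_m(θ) satisfies ε > γ for every γ ∈ D_k(θ) and every k < m. Then the family ℬ_m := {B(θ, δ) : δ ∈ Γ ∪ {∞}, deg_K B(θ, δ) = m} has a smallest element with respect to inclusion if and only if D_m(θ) has a maximal element; in that case, the smallest ball in ℬ_m is B(θ, max D_m(θ)). -/
/-- The family `ℬ_m` of closed balls centered at `θ` of degree `m` over `K`. -/
def ballFamily (K : Type*) {Kbar Γ : Type*} [Field K] [Field Kbar]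
    [Algebra K Kbar] [AddCommGroup Γ] [LinearOrder Γ] [IsOrderedAddMonoid Γ]
    (v : Kbar → WithTop Γ) (θ : Kbar) (m : ℕ) : Set (Set Kbar) :=
  {S : Set Kbar | ∃ δ : WithTop Γ, S = closedBall v θ δ ∧ ballDeg K v θ δ = m}

/-!
Every distance of degree `k < m` lies below `ε`, so a ball `B(θ, δ)` with `δ ≥ ε` has degree
exactly `m` as soon as it contains a point of degree `m`; conversely a ball of degree `m ≥ 1`
contains such a point. Hence `B(θ, γ) ∈ ℬ_m` for every `γ ∈ D_m(θ)` with `γ ≥ ε`, and every ball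
of `ℬ_m` contains one of these, so a smallest ball of `ℬ_m` and a largest element of `D_m(θ)`
determine each other.
-/

section BallFamily

variable {K Kbar Γ : Type*} [Field K] [Field Kbar] [Algebra K Kbar]
  [AddCommGroup Γ] [LinearOrder Γ] [IsOrderedAddMonoid Γ] {v : Kbar → WithTop Γ} {θ : Kbar}

theorem closedBall_antitone : Antitone (closedBall v θ) :=
  fun _ _ h _ ha => h.trans ha

theorem ballDeg_eq_of_mem_closedBall {m : ℕ} {ε δ : WithTop Γ} {a : Kbar}
    (hε : ∀ k < m, ∀ γ ∈ distSet K v θ k, γ < ε) (hεδ : ε ≤ δ)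
    (ha : a ∈ closedBall v θ δ) (hdeg : (minpoly K a).natDegree = m) :
    ballDeg K v θ δ = m := by
  refine le_antisymm (Nat.sInf_le ⟨a, ha, hdeg⟩) (le_csInf ⟨_, a, ha, rfl⟩ ?_)
  rintro k ⟨b, hb, rfl⟩
  by_contra! hlt
  exact (hε _ hlt _ ⟨b, rfl, rfl⟩).not_ge (hεδ.trans hb)

theorem exists_mem_closedBall_natDegree_eq_of_ballDeg_eq {m : ℕ} {δ : WithTop Γ} (hm : 0 < m)
    (h : ballDeg K v θ δ = m) :
    ∃ a ∈ closedBall v θ δ, (minpoly K a).natDegree = m := by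
  -- `sInf ∅ = 0` in `ℕ`, so a ball of positive degree has a point realizing it.
  obtain ⟨a, ha, hdeg⟩ := Nat.sInf_mem (Nat.nonempty_of_pos_sInf (h ▸ hm : 0 < ballDeg K v θ δ))
  exact ⟨a, ha, hdeg.trans h⟩

theorem closedBall_mem_ballFamily {m : ℕ} {ε γ : WithTop Γ}
    (hε : ∀ k < m, ∀ γ ∈ distSet K v θ k, γ < ε) (hεγ : ε ≤ γ) (hγ : γ ∈ distSet K v θ m) :
    closedBall v θ γ ∈ ballFamily K v θ m := by
  obtain ⟨b, hb, rfl⟩ := hγ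
  exact ⟨_, rfl, ballDeg_eq_of_mem_closedBall hε hεγ (le_refl (v (θ - b))) hb⟩

theorem isLeast_ballFamily_of_isGreatest_distSet {m : ℕ} {ε δ : WithTop Γ} (hm : 0 < m)
    (hε : ∀ k < m, ∀ γ ∈ distSet K v θ k, γ < ε) (hεm : ε ∈ distSet K v θ m)
    (hδ : IsGreatest (distSet K v θ m) δ) :
    IsLeast (ballFamily K v θ m) (closedBall v θ δ) := by
  refine ⟨closedBall_mem_ballFamily hε (hδ.2 hεm) hδ.1, ?_⟩
  rintro _ ⟨δ', rfl, hdeg⟩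
  obtain ⟨a, ha, hadeg⟩ := exists_mem_closedBall_natDegree_eq_of_ballDeg_eq hm hdeg
  exact closedBall_antitone (ha.trans (hδ.2 ⟨a, hadeg, rfl⟩))

theorem exists_isGreatest_distSet_of_isLeast_ballFamily {m : ℕ} {ε : WithTop Γ}
    {S : Set Kbar} (hm : 0 < m) (hε : ∀ k < m, ∀ γ ∈ distSet K v θ k, γ < ε)
    (hεm : ε ∈ distSet K v θ m) (hS : IsLeast (ballFamily K v θ m) S) :
    ∃ δ, IsGreatest (distSet K v θ m) δ := by
  obtain ⟨⟨δ₀, rfl, hdeg⟩, hleast⟩ := hS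
  obtain ⟨a, ha, hadeg⟩ := exists_mem_closedBall_natDegree_eq_of_ballDeg_eq hm hdeg
  refine ⟨v (θ - a), ⟨a, hadeg, rfl⟩, fun γ hγ => ?_⟩
  have hmax : max γ ε ∈ distSet K v θ m := by
    rcases max_choice γ ε with h | h <;> rwa [h]
  exact le_sup_left.trans (hleast (closedBall_mem_ballFamily hε le_sup_right hmax) ha)

end BallFamily

theorem smallest_ball_iff_max_dist_general {K Kbar Γ : Type*} [Field K] [Field Kbar] [Algebra K Kbar]
    [AddCommGroup Γ] [LinearOrder Γ] [IsOrderedAddMonoid Γ]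
    (v : Kbar → WithTop Γ)
    (θ : Kbar)
    (m : ℕ) (hm1 : 1 ≤ m)
    (hε : ∃ ε ∈ distSet K v θ m, ∀ k < m, ∀ γ ∈ distSet K v θ k, γ < ε) :
    ((∃ S ∈ ballFamily K v θ m, ∀ T ∈ ballFamily K v θ m, S ⊆ T) ↔
        ∃ δ, IsGreatest (distSet K v θ m) δ) ∧
      (∀ δ : WithTop Γ, IsGreatest (distSet K v θ m) δ →
        closedBall v θ δ ∈ ballFamily K v θ m ∧
          ∀ T ∈ ballFamily K v θ m, closedBall v θ δ ⊆ T) := by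
  obtain ⟨ε, hεm, hεlt⟩ := hε
  have hleast : ∀ δ, IsGreatest (distSet K v θ m) δ →
      IsLeast (ballFamily K v θ m) (closedBall v θ δ) :=
    fun δ hδ => isLeast_ballFamily_of_isGreatest_distSet hm1 hεlt hεm hδ
  refine ⟨⟨?_, fun ⟨δ, hδ⟩ => ⟨_, hleast δ hδ⟩⟩, hleast⟩
  rintro ⟨S, hS⟩
  exact exists_isGreatest_distSet_of_isLeast_ballFamily hm1 hεlt hεm hS

/-- For `1 ≤ m < n = deg_K θ` with some `ε ∈ D_m(θ)` exceeding all distances of smaller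
degree: `ℬ_m` has a smallest element under inclusion iff `D_m(θ)` has a maximal element,
in which case the smallest ball is `B(θ, max D_m(θ))`. -/
theorem smallest_ball_iff_max_dist {K Kbar Γ : Type*} [Field K] [Field Kbar] [Algebra K Kbar]
    [IsAlgClosure K Kbar] [AddCommGroup Γ] [LinearOrder Γ] [IsOrderedAddMonoid Γ]
    (v : Kbar → WithTop Γ)
    (hv0 : ∀ x : Kbar, v x = ⊤ ↔ x = 0)
    (hvmul : ∀ x y : Kbar, v (x * y) = v x + v y)
    (hvadd : ∀ x y : Kbar, min (v x) (v y) ≤ v (x + y))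
    (θ : Kbar) (n : ℕ) (hn : (minpoly K θ).natDegree = n)
    (m : ℕ) (hm1 : 1 ≤ m) (hmn : m < n)
    (hε : ∃ ε ∈ distSet K v θ m, ∀ k < m, ∀ γ ∈ distSet K v θ k, γ < ε) :
    ((∃ S ∈ ballFamily K v θ m, ∀ T ∈ ballFamily K v θ m, S ⊆ T) ↔
        ∃ δ, IsGreatest (distSet K v θ m) δ) ∧
      (∀ δ : WithTop Γ, IsGreatest (distSet K v θ m) δ →
        closedBall v θ δ ∈ ballFamily K v θ m ∧
          ∀ T ∈ ballFamily K v θ m, closedBall v θ δ ⊆ T) :=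
  smallest_ball_iff_max_dist_general v θ m hm1 hε
end

section
/- Let (K, v) be a valued field whose valuation ring O_v is Henselian, let L/K be a finite field extension, and let w be a valuation on L extending v. Write e := (w(L*) : v(K*)) for the ramification index, f := [Lw : Kv] for the residue degree, and assume [L : K] = e·f (the extension is defectless), the quotient group w(L*)/v(K*) is cyclic, and the residue field extension Lw/Kv is separable. Let z̄ ∈ Lw be a generator of Lw over Kv, let φ ∈ O_v[X] be a monic polynomial whose reduction modulo the maximal ideal of O_v is the minimal polynomial of z̄ over Kv, let z ∈ L be a root of φ whose residue is z̄, and let α ∈ L with w(α) > 0 such that w(α) + v(K*) generates w(L*)/v(K*). Then θ := z + α generates L over K, i.e., L = K(θ); in particular, the minimal polynomial of θ over K has degree e·f. -/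
/-! The residues of `1, θ, …, θ^(f-1)` are the powers of `z̄`, a basis of `Lw/Kv`; hence every
nonzero `K`-combination of them has value in `v(K*)`. Since the reduction of `φ` is separable,
`φ'(z)` is a unit, and the Taylor expansion of `β := φ(θ) = φ(z + α)` gives `w(β) = w(α)`, so the
values of `1, β, …, β^(e-1)` lie in the `e` distinct cosets of `v(K*)`. In a `K`-combination of
the `θ^j β^i`, grouped by `i`, the nonzero groups therefore have pairwise distinct values, so the
combination vanishes only if all coefficients do. These `e·f` independent elements lie in `K(θ)`,
which is therefore all of `L`. -/

open IsLocalRing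

/-- The value group `w(F*)`, as a subgroup of `Γ₀ˣ`. -/
def valueSubgroup {F Γ₀ : Type*} [Field F] [LinearOrderedCommGroupWithZero Γ₀]
    (w : Valuation F Γ₀) : Subgroup Γ₀ˣ where
  carrier := {γ : Γ₀ˣ | ∃ x : F, x ≠ 0 ∧ w x = (γ : Γ₀)}
  one_mem' := ⟨1, one_ne_zero, by simp⟩
  mul_mem' := by
    rintro a b ⟨x, hx, hwx⟩ ⟨y, hy, hwy⟩
    exact ⟨x * y, mul_ne_zero hx hy, by rw [map_mul, hwx, hwy]; rfl⟩
  inv_mem' := by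
    rintro a ⟨x, hx, hwx⟩
    refine ⟨x⁻¹, inv_ne_zero hx, ?_⟩
    rw [map_inv₀, hwx, Units.val_inv_eq_inv_val]

open Polynomial

theorem Subgroup.relIndex_dvd_of_zpow_mem {G : Type*} [CommGroup G] {H A : Subgroup G} {g : G}
    (hg : g ∈ A) (hgen : ∀ a ∈ A, ∃ n : ℤ, a / g ^ n ∈ H) {m : ℤ} (hm : g ^ m ∈ H) :
    (H.relIndex A : ℤ) ∣ m := by
  set q : A ⧸ H.subgroupOf A := QuotientGroup.mk ⟨g, hg⟩
  have hq : ∀ x, x ∈ zpowers q := by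
    rintro ⟨a, ha⟩
    obtain ⟨n, hn⟩ := hgen a ha
    refine ⟨n, QuotientGroup.eq_iff_div_mem.2 ?_⟩
    simpa [Subgroup.mem_subgroupOf] using H.inv_mem hn
  rw [Subgroup.relIndex, Subgroup.index, ← orderOf_eq_card_of_forall_mem_zpowers hq,
    orderOf_dvd_iff_zpow_eq_one, ← QuotientGroup.mk_zpow, QuotientGroup.eq_one_iff]
  simpa [Subgroup.mem_subgroupOf] using hm

theorem IntermediateField.eq_top_of_linearIndependent {K L : Type*} [Field K] [Field L]
    [Algebra K L] [FiniteDimensional K L] {F : IntermediateField K L} {ι : Type*} [Fintype ι]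
    {b : ι → L} (hb : LinearIndependent K b) (hcard : Fintype.card ι = Module.finrank K L)
    (hmem : ∀ i, b i ∈ F) : F = ⊤ := by
  refine eq_top_iff.2 fun x _ => ?_
  have hx : x ∈ Submodule.span K (Set.range b) := by
    rw [hb.span_eq_top_of_card_eq_finrank' hcard]
    trivial
  exact (Submodule.span_le (p := Subalgebra.toSubmodule F.toSubalgebra)).2
    (Set.range_subset_iff.2 hmem) hx

theorem IntermediateField.natDegree_minpoly_eq_finrank_of_adjoin_eq_top {F E : Type*} [Field F]
    [Field E] [Algebra F E] {x : E} (hx : adjoin F {x} = ⊤) :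
    (minpoly F x).natDegree = Module.finrank F E := by
  by_cases hint : IsIntegral F x
  · rw [← adjoin.finrank hint, hx, finrank_top']
  · have hfin : ¬ FiniteDimensional F E := fun _ => hint (.of_finite F x)
    rw [minpoly.eq_zero hint, natDegree_zero, Module.finrank_of_not_finite hfin]

theorem Polynomial.isUnit_derivative_eval_of_separable {R : Type*} [CommRing R] [IsLocalRing R]
    {P : R[X]} {z : R} (hsep : (P.map (residue R)).Separable) (hz : P.IsRoot z) :
    IsUnit (P.derivative.eval z) := by
  rw [← residue_ne_zero_iff_isUnit, ← eval₂_at_apply, ← eval_map, ← derivative_map]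
  refine hsep.eval₂_derivative_ne_zero (RingHom.id _) ?_
  rw [eval₂_id, eval_map, eval₂_at_apply, hz.eq_zero, map_zero]

namespace Valuation

variable {K L Γ₀ : Type*} [Field K] [Field L] [LinearOrderedCommGroupWithZero Γ₀]

theorem eq_of_map_pow_eq_mul_map_pow (v : Valuation K Γ₀) (w : Valuation L Γ₀) {γ : Γ₀ˣ}
    (hgen : ∀ δ ∈ valueSubgroup w, ∃ n : ℤ, δ / γ ^ n ∈ valueSubgroup v) {y : L} (hy : w y = γ)
    {i i' : ℕ} (hi : i < (valueSubgroup v).relIndex (valueSubgroup w))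
    (hi' : i' < (valueSubgroup v).relIndex (valueSubgroup w)) {a : K} (ha : a ≠ 0)
    (h : w (y ^ i) = v a * w (y ^ i')) : i = i' := by
  have hγ : γ ∈ valueSubgroup w := ⟨y, fun h0 => γ.ne_zero (by rw [← hy, h0, map_zero]), hy⟩
  have hmem : γ ^ ((i : ℤ) - i') ∈ valueSubgroup v := by
    refine ⟨a, ha, ?_⟩
    rw [Units.val_zpow_eq_zpow_val, zpow_sub₀ γ.ne_zero, zpow_natCast, zpow_natCast,
      eq_div_iff (pow_ne_zero _ γ.ne_zero), ← hy, ← map_pow, ← map_pow, h]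
  have hdvd := Subgroup.relIndex_dvd_of_zpow_mem hγ hgen hmem
  have := Int.eq_zero_of_dvd_of_natAbs_lt_natAbs hdvd (by omega)
  omega

theorem eq_zero_of_sum_eq_zero_of_injOn (w : Valuation L Γ₀) {ι : Type*} [Fintype ι]
    {t : ι → L} (ht : Set.InjOn (fun i => w (t i)) {i | t i ≠ 0}) (hsum : ∑ i, t i = 0)
    (i : ι) : t i = 0 := by
  classical
  by_contra hi
  obtain ⟨i₁, -, hmax⟩ := Finset.exists_max_image Finset.univ (fun i => w (t i)) ⟨i, by simp⟩
  have hi₁ : t i₁ ≠ 0 := by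
    rw [← w.ne_zero_iff, ← pos_iff_ne_zero]
    exact ((w.pos_iff).2 hi).trans_le (hmax i (by simp))
  have hlt : ∀ j ∈ Finset.univ.erase i₁, w (t j) < w (t i₁) := by
    intro j hj
    by_cases hj0 : t j = 0
    · simpa [hj0, pos_iff_ne_zero] using hi₁
    · exact (hmax j (by simp)).lt_of_ne fun h => (Finset.ne_of_mem_erase hj) (ht hj0 hi₁ h)
  have := w.map_sum_eq_of_lt (Finset.mem_univ i₁) (fun j hj => hlt j (by simpa using hj))
  rw [hsum, map_zero, eq_comm, w.zero_iff] at this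
  exact hi₁ this

theorem map_eq_one_iff_residue_ne_zero (w : Valuation L Γ₀) (x : w.valuationSubring) :
    w (x : L) = 1 ↔ residue _ x ≠ 0 := by
  rw [residue_ne_zero_iff_isUnit]
  exact (valuationSubring.integers w).isUnit_iff_valuation_eq_one.symm

theorem map_eval_add_of_isRoot (w : Valuation L Γ₀) {P : w.valuationSubring[X]}
    (hsep : (P.map (residue _)).Separable) {z a : w.valuationSubring} (hz : P.IsRoot z)
    (ha : w a < 1) : w ((P.eval (z + a) : w.valuationSubring) : L) = w a := by
  obtain ⟨k, hk⟩ := P.binomExpansion z a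
  rcases eq_or_ne (w a) 0 with h0 | h0
  · have ha0 : a = 0 := Subtype.ext (w.zero_iff.1 h0)
    simp [ha0, hz.eq_zero]
  have hlin : w ((P.derivative.eval z * a : w.valuationSubring) : L) = w a := by
    have hunit := (w.map_eq_one_iff_residue_ne_zero _).2
      ((residue_ne_zero_iff_isUnit _).2 (isUnit_derivative_eval_of_separable hsep hz))
    simp [hunit]
  have hquad : w ((k * a ^ 2 : w.valuationSubring) : L) < w a := by
    calc w ((k * a ^ 2 : w.valuationSubring) : L) ≤ w a ^ 2 := by
          simpa using mul_le_of_le_one_left zero_le k.2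
      _ < w a := pow_lt_self_of_lt_one₀ (pos_iff_ne_zero.2 h0) ha one_lt_two
  rw [hk, hz.eq_zero, zero_add, Subring.coe_add, map_add_eq_of_lt_left _ (hlin ▸ hquad), hlin]

variable [Algebra K L]

theorem linearIndependent_mul_of_map_sum_mem_range (v : Valuation K Γ₀) (w : Valuation L Γ₀)
    {ι κ : Type*} [Fintype ι] [Fintype κ] {x : κ → L} {y : ι → L}
    (hx : ∀ c : κ → K, c ≠ 0 → ∃ a : K, a ≠ 0 ∧ w (∑ j, c j • x j) = v a)
    (hy0 : ∀ i, y i ≠ 0) (hy : ∀ i i' (a : K), a ≠ 0 → w (y i) = v a * w (y i') → i = i') :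
    LinearIndependent K fun p : ι × κ => x p.2 * y p.1 := by
  rw [Fintype.linearIndependent_iff]
  intro c hc
  set row : ι → L := fun i => ∑ j, c (i, j) • x j
  have hrow : ∀ i, row i ≠ 0 → ∃ a : K, a ≠ 0 ∧ w (row i) = v a := by
    intro i hi
    refine hx _ fun h => hi ?_
    simp [row, funext_iff.1 h]
  have hsum : ∑ i, row i * y i = 0 := by
    rw [← hc, Fintype.sum_prod_type]
    simp only [row, Finset.sum_mul, smul_mul_assoc]
  have hinj : Set.InjOn (fun i => w (row i * y i)) {i | row i * y i ≠ 0} := by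
    intro i hi i' hi' h
    obtain ⟨a, ha, hwa⟩ := hrow i (left_ne_zero_of_mul hi)
    obtain ⟨a', ha', hwa'⟩ := hrow i' (left_ne_zero_of_mul hi')
    refine hy i i' (a' / a) (div_ne_zero ha' ha) ?_
    simp only [map_mul, hwa, hwa'] at h
    rw [map_div₀, div_mul_eq_mul_div, eq_div_iff ((v.ne_zero_iff).2 ha), mul_comm, h]
  rintro ⟨i, j⟩
  have hrow0 : row i = 0 := by
    simpa [hy0 i] using w.eq_zero_of_sum_eq_zero_of_injOn hinj hsum i
  by_contra hcij
  obtain ⟨a, ha, hwa⟩ := hx (fun j => c (i, j)) fun h => hcij (funext_iff.1 h j)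
  exact ha ((v.zero_iff).1 (hwa.symm.trans (by simp [← hrow0, row])))

variable {v : Valuation K Γ₀} {w : Valuation L Γ₀}

def valuationSubringHom (hext : ∀ x : K, w (algebraMap K L x) = v x) :
    v.valuationSubring →+* w.valuationSubring :=
  (algebraMap K L).restrict _ _ fun x hx => by
    rw [mem_valuationSubring_iff, hext]
    exact hx

theorem coe_valuationSubringHom (hext : ∀ x : K, w (algebraMap K L x) = v x)
    (x : v.valuationSubring) : (valuationSubringHom hext x : L) = algebraMap K L x := rfl

theorem coe_eval_map_valuationSubringHom (hext : ∀ x : K, w (algebraMap K L x) = v x)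
    (φ : v.valuationSubring[X]) (y : w.valuationSubring) :
    (((φ.map (valuationSubringHom hext)).eval y : w.valuationSubring) : L) =
      aeval (y : L) (φ.map (algebraMap v.valuationSubring K)) := by
  rw [eval_map, aeval_def, eval₂_map]
  exact hom_eval₂ φ _ w.valuationSubring.subtype y

variable [Algebra (ResidueField v.valuationSubring) (ResidueField w.valuationSubring)]

theorem map_sum_valuationSubringHom_mul_eq_one (hext : ∀ x : K, w (algebraMap K L x) = v x)
    (hres : (residue w.valuationSubring).comp (valuationSubringHom hext) =
      (algebraMap _ _).comp (residue v.valuationSubring))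
    {ι : Type*} [Fintype ι] {x : ι → w.valuationSubring}
    (hx : LinearIndependent (ResidueField v.valuationSubring) fun j => residue _ (x j))
    {d : ι → v.valuationSubring} {j₀ : ι} (hd : residue _ (d j₀) ≠ 0) :
    w (∑ j, valuationSubringHom hext (d j) * x j : w.valuationSubring) = 1 := by
  rw [map_eq_one_iff_residue_ne_zero]
  intro h
  apply hd
  refine Fintype.linearIndependent_iff.1 hx (fun j => residue _ (d j)) ?_ j₀
  have hterm : ∀ j, residue _ (valuationSubringHom hext (d j) * x j) =
      residue _ (d j) • residue _ (x j) := fun j => by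
    rw [map_mul, Algebra.smul_def, ← RingHom.comp_apply (residue _), hres, RingHom.comp_apply]
  simpa only [map_sum, hterm] using h

theorem exists_map_sum_smul_eq (hext : ∀ x : K, w (algebraMap K L x) = v x)
    (hres : (residue w.valuationSubring).comp (valuationSubringHom hext) =
      (algebraMap _ _).comp (residue v.valuationSubring))
    {ι : Type*} [Fintype ι] {x : ι → w.valuationSubring}
    (hx : LinearIndependent (ResidueField v.valuationSubring) fun j => residue _ (x j))
    {c : ι → K} (hc : c ≠ 0) : ∃ a : K, a ≠ 0 ∧ w (∑ j, c j • (x j : L)) = v a := by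
  obtain ⟨j₁, hj₁⟩ := Function.ne_iff.1 hc
  obtain ⟨j₀, -, hmax⟩ :=
    Finset.exists_max_image Finset.univ (fun j => v (c j)) ⟨j₁, Finset.mem_univ _⟩
  have hc₀ : c j₀ ≠ 0 := by
    rw [← v.ne_zero_iff, ← pos_iff_ne_zero]
    exact (v.pos_iff.2 hj₁).trans_le (hmax j₁ (Finset.mem_univ _))
  let d : ι → v.valuationSubring := fun j => ⟨c j / c j₀, by
    rw [mem_valuationSubring_iff, map_div₀]
    exact div_le_one_of_le₀ (hmax j (Finset.mem_univ _)) zero_le⟩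
  have hd : residue _ (d j₀) ≠ 0 := by
    rw [show d j₀ = 1 from Subtype.ext (div_self hc₀), map_one]
    exact one_ne_zero
  have hsplit : ∑ j, c j • (x j : L) = algebraMap K L (c j₀) *
      (∑ j, valuationSubringHom hext (d j) * x j : w.valuationSubring) := by
    rw [AddSubmonoidClass.coe_finsetSum, Finset.mul_sum]
    refine Finset.sum_congr rfl fun j _ => ?_
    rw [MulMemClass.coe_mul, coe_valuationSubringHom, ← mul_assoc, ← map_mul,
      mul_div_cancel₀ _ hc₀, Algebra.smul_def]
  refine ⟨c j₀, hc₀, ?_⟩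
  rw [hsplit, map_mul, map_sum_valuationSubringHom_mul_eq_one hext hres hx hd, mul_one, hext]

theorem linearIndependent_pow_mul_pow (hext : ∀ x : K, w (algebraMap K L x) = v x)
    (hres : (residue w.valuationSubring).comp (valuationSubringHom hext) =
      (algebraMap _ _).comp (residue v.valuationSubring))
    (x : w.valuationSubring) {y : L} {γ : Γ₀ˣ} (hy : w y = γ)
    (hgen : ∀ δ ∈ valueSubgroup w, ∃ n : ℤ, δ / γ ^ n ∈ valueSubgroup v) :
    LinearIndependent K fun p : Fin ((valueSubgroup v).relIndex (valueSubgroup w)) ×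
        Fin (minpoly (ResidueField v.valuationSubring) (residue _ x)).natDegree =>
      (x : L) ^ (p.2 : ℕ) * y ^ (p.1 : ℕ) := by
  set n := (minpoly (ResidueField v.valuationSubring) (residue _ x)).natDegree
  have hpow : LinearIndependent (ResidueField v.valuationSubring)
      fun j : Fin n => residue _ (x ^ (j : ℕ)) := by
    simpa only [map_pow] using linearIndependent_pow (residue _ x)
  have hy0 : y ≠ 0 := fun h0 => γ.ne_zero (by rw [← hy, h0, map_zero])
  refine linearIndependent_mul_of_map_sum_mem_range v w (x := fun j : Fin n => (x : L) ^ (j : ℕ))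
    (y := fun i : Fin ((valueSubgroup v).relIndex (valueSubgroup w)) => y ^ (i : ℕ))
    (fun c hc => by
      simpa only [SubmonoidClass.coe_pow] using exists_map_sum_smul_eq hext hres hpow hc)
    (fun i => pow_ne_zero _ hy0)
    fun i i' a ha h => Fin.ext (eq_of_map_pow_eq_mul_map_pow v w hgen hy i.2 i'.2 ha h)

end Valuation

theorem ore_generalization_general {K L Γ₀ : Type*} [Field K] [Field L] [Algebra K L]
    [FiniteDimensional K L] [LinearOrderedCommGroupWithZero Γ₀]
    (v : Valuation K Γ₀) (w : Valuation L Γ₀)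
    (hext : ∀ x : K, w (algebraMap K L x) = v x)
    [Algebra (ResidueField v.valuationSubring) (ResidueField w.valuationSubring)]
    (hcompat : ∀ (x : K) (hx : x ∈ v.valuationSubring)
        (hx' : algebraMap K L x ∈ w.valuationSubring),
      algebraMap (ResidueField v.valuationSubring) (ResidueField w.valuationSubring)
          (residue _ ⟨x, hx⟩) =
        residue _ ⟨algebraMap K L x, hx'⟩)
    [Algebra.IsSeparable (ResidueField v.valuationSubring)
      (ResidueField w.valuationSubring)]
    (e f : ℕ)
    (he : (valueSubgroup v).relIndex (valueSubgroup w) = e)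
    (hf : Module.finrank (ResidueField v.valuationSubring)
      (ResidueField w.valuationSubring) = f)
    (hd : Module.finrank K L = e * f)
    (zbar : ResidueField w.valuationSubring)
    (hzbar : IntermediateField.adjoin (ResidueField v.valuationSubring) {zbar} = ⊤)
    (φ : Polynomial v.valuationSubring)
    (hφred : φ.map (residue v.valuationSubring) =
      minpoly (ResidueField v.valuationSubring) zbar)
    (z : L)
    (hzroot : Polynomial.eval₂
      ((algebraMap K L).comp (algebraMap v.valuationSubring K)) z φ = 0)
    (hzmem : z ∈ w.valuationSubring)
    (hzres : residue w.valuationSubring ⟨z, hzmem⟩ = zbar)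
    (α : L) (hαpos : w α < 1)
    (γα : Γ₀ˣ) (hγα : w α = (γα : Γ₀))
    (hαgen : ∀ γ ∈ valueSubgroup w, ∃ n : ℤ, γ / γα ^ n ∈ valueSubgroup v) :
    IntermediateField.adjoin K {z + α} = ⊤ ∧
      (minpoly K (z + α)).natDegree = e * f := by
  set θ := z + α
  have hres : (residue w.valuationSubring).comp (Valuation.valuationSubringHom hext) =
      (algebraMap _ _).comp (residue v.valuationSubring) :=
    RingHom.ext fun x => (hcompat x x.2 _).symm
  let Θ : w.valuationSubring := ⟨z, hzmem⟩ + ⟨α, hαpos.le⟩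
  have hΘ : residue _ Θ = zbar := by
    rw [map_add, hzres, (residue_eq_zero_iff _).2 ((w.mem_maximalIdeal_iff).2 hαpos), add_zero]
  have hdeg : (minpoly (ResidueField v.valuationSubring) zbar).natDegree = f :=
    hf ▸ IntermediateField.natDegree_minpoly_eq_finrank_of_adjoin_eq_top hzbar
  set P := φ.map (Valuation.valuationSubringHom hext)
  have hPz : P.IsRoot ⟨z, hzmem⟩ := Subtype.ext <| by
    rw [Valuation.coe_eval_map_valuationSubringHom, aeval_def, eval₂_map]
    exact hzroot
  have hsep : (P.map (residue _)).Separable := by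
    rw [Polynomial.map_map, hres, ← Polynomial.map_map, hφred]
    exact Polynomial.Separable.map (Algebra.IsSeparable.isSeparable _ zbar)
  have hβ : w (P.eval Θ : w.valuationSubring) = γα := by
    rw [Valuation.map_eval_add_of_isRoot w hsep hPz hαpos, hγα]
  have hβmem : ((P.eval Θ : w.valuationSubring) : L) ∈ IntermediateField.adjoin K {θ} := by
    rw [Valuation.coe_eval_map_valuationSubringHom]
    exact IntermediateField.algebra_adjoin_le_adjoin K {θ} (aeval_mem_adjoin_singleton K θ)
  have htop : IntermediateField.adjoin K {θ} = ⊤ :=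
    IntermediateField.eq_top_of_linearIndependent
      (Valuation.linearIndependent_pow_mul_pow hext hres Θ hβ hαgen)
      (by simp [he, hΘ, hdeg, hd]) fun _ =>
        mul_mem (pow_mem (IntermediateField.mem_adjoin_simple_self K θ) _) (pow_mem hβmem _)
  exact ⟨htop, (IntermediateField.natDegree_minpoly_eq_finrank_of_adjoin_eq_top htop).trans hd⟩

/-- Generalization of Ore's theorem: for a Henselian valued field `(K, v)` and a finite
defectless extension `(L, w)` with cyclic value group quotient and separable residue
extension, if `z` is a root of a monic lift `φ` of the minimal polynomial of a residue
generator `z̄` with residue `z̄`, and `α` has positive value generating `w(L*)/v(K*)`,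
then `θ = z + α` generates `L/K`; in particular `deg (minpoly θ) = e·f`. -/
theorem ore_generalization {K L Γ₀ : Type*} [Field K] [Field L] [Algebra K L]
    [FiniteDimensional K L] [LinearOrderedCommGroupWithZero Γ₀]
    (v : Valuation K Γ₀) (w : Valuation L Γ₀)
    (hext : ∀ x : K, w (algebraMap K L x) = v x)
    [HenselianLocalRing v.valuationSubring]
    [Algebra (ResidueField v.valuationSubring) (ResidueField w.valuationSubring)]
    (hcompat : ∀ (x : K) (hx : x ∈ v.valuationSubring)
        (hx' : algebraMap K L x ∈ w.valuationSubring),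
      algebraMap (ResidueField v.valuationSubring) (ResidueField w.valuationSubring)
          (residue _ ⟨x, hx⟩) =
        residue _ ⟨algebraMap K L x, hx'⟩)
    [Algebra.IsSeparable (ResidueField v.valuationSubring)
      (ResidueField w.valuationSubring)]
    (e f : ℕ)
    (he : (valueSubgroup v).relIndex (valueSubgroup w) = e)
    (hf : Module.finrank (ResidueField v.valuationSubring)
      (ResidueField w.valuationSubring) = f)
    (hd : Module.finrank K L = e * f)
    (hcyc : ∃ γ₀ ∈ valueSubgroup w, ∀ γ ∈ valueSubgroup w,
      ∃ n : ℤ, γ / γ₀ ^ n ∈ valueSubgroup v)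
    (zbar : ResidueField w.valuationSubring)
    (hzbar : IntermediateField.adjoin (ResidueField v.valuationSubring) {zbar} = ⊤)
    (φ : Polynomial v.valuationSubring) (hφmonic : φ.Monic)
    (hφred : φ.map (residue v.valuationSubring) =
      minpoly (ResidueField v.valuationSubring) zbar)
    (z : L)
    (hzroot : Polynomial.eval₂
      ((algebraMap K L).comp (algebraMap v.valuationSubring K)) z φ = 0)
    (hzmem : z ∈ w.valuationSubring)
    (hzres : residue w.valuationSubring ⟨z, hzmem⟩ = zbar)
    (α : L) (hα0 : α ≠ 0) (hαpos : w α < 1)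
    (γα : Γ₀ˣ) (hγα : w α = (γα : Γ₀))
    (hαgen : ∀ γ ∈ valueSubgroup w, ∃ n : ℤ, γ / γα ^ n ∈ valueSubgroup v) :
    IntermediateField.adjoin K {z + α} = ⊤ ∧
      (minpoly K (z + α)).natDegree = e * f :=
  ore_generalization_general v w hext hcompat e f he hf hd zbar hzbar φ hφred z hzroot hzmem hzres α
    hαpos γα hγα hαgen
end

section
/- Let F be a field equipped with an additive valuation v with values in Γ ∪ {∞}, let K ⊆ F be a subfield, and let β ∈ F with β² ∈ K. Let σ : F → F be a field automorphism with σ(x) = x for all x ∈ K and v(σ(y)) = v(y) for all y ∈ F. Assume v(2) = 0 and that there exists a ∈ K with v(β − a) > v(a). Then σ(β) = β. -/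
/-!
Since `σ` fixes `β ^ 2 ∈ K`, `σ β = ± β`. If `σ β = -β`, then applying `σ` to `β - a` gives
`v a < v (β + a)` as well. But `2 a = (β + a) + (a - β)`, so
`v a = v (2 a) ≥ min (v (β + a)) (v (β - a)) > v a` because `v 2 = 0`.
-/

theorem WithTop.eq_zero_of_add_self_eq_zero {Γ : Type*} [AddCommGroup Γ] [LinearOrder Γ]
    [IsOrderedAddMonoid Γ] {x : WithTop Γ} (hx : x + x = 0) : x = 0 := by
  induction x with
  | top => simp at hx
  | coe g =>
    have hg : g + g = 0 := by exact_mod_cast hx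
    rcases lt_trichotomy g 0 with hlt | heq | hgt
    · exact absurd hg (add_neg hlt hlt).ne
    · simp [heq]
    · exact absurd hg (add_pos hgt hgt).ne'

section Valuation

variable {F Γ : Type*} [Field F] [AddCommGroup Γ] [LinearOrder Γ] [IsOrderedAddMonoid Γ]
  {v : F → WithTop Γ}

theorem val_one_eq_zero (hvmul : ∀ x y : F, v (x * y) = v x + v y) {x : F} (hx : v x ≠ ⊤) :
    v 1 = 0 :=
  WithTop.add_left_cancel hx (by rw [← hvmul, mul_one, add_zero])

theorem val_neg (hvmul : ∀ x y : F, v (x * y) = v x + v y) (hv1 : v 1 = 0) (x : F) :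
    v (-x) = v x := by
  have hvm1 : v (-1) = 0 :=
    WithTop.eq_zero_of_add_self_eq_zero (by rw [← hvmul, neg_one_mul, neg_neg, hv1])
  rw [neg_eq_neg_one_mul, hvmul, hvm1, zero_add]

theorem val_add_le_of_val_lt_val_sub (hvmul : ∀ x y : F, v (x * y) = v x + v y)
    (hvadd : ∀ x y : F, min (v x) (v y) ≤ v (x + y)) (hv2 : v 2 = 0) {a β : F}
    (ha : v a < v (β - a)) : v (β + a) ≤ v a := by
  have hv1 : v 1 = 0 := val_one_eq_zero hvmul (x := 2) (by simp [hv2])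
  have h2a : v (2 * a) = v a := by rw [hvmul, hv2, zero_add]
  have hmin := hvadd (β + a) (-(β - a))
  rw [show β + a + -(β - a) = 2 * a by ring, h2a, val_neg hvmul hv1] at hmin
  by_contra! h
  exact (lt_min h ha).not_ge hmin

end Valuation

theorem fixed_of_approx_general {F Γ : Type*} [Field F] [AddCommGroup Γ] [LinearOrder Γ] [IsOrderedAddMonoid Γ]
    (v : F → WithTop Γ)
    (hvmul : ∀ x y : F, v (x * y) = v x + v y)
    (hvadd : ∀ x y : F, min (v x) (v y) ≤ v (x + y))
    (hv2 : v 2 = 0)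
    (K : Subfield F) (β : F) (hβ : β ^ 2 ∈ K)
    (σ : F ≃+* F) (hσK : ∀ x ∈ K, σ x = x)
    (hσv : ∀ y : F, v (σ y) = v y)
    (happrox : ∃ a ∈ K, v a < v (β - a)) :
    σ β = β := by
  obtain ⟨a, haK, ha⟩ := happrox
  have hsq : σ β ^ 2 = β ^ 2 := by rw [← map_pow, hσK _ hβ]
  refine (sq_eq_sq_iff_eq_or_eq_neg.mp hsq).resolve_right fun hneg => ?_
  have hv1 : v 1 = 0 := val_one_eq_zero hvmul (x := 2) (by simp [hv2])
  have hclose : v a < v (β + a) :=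
    calc v a < v (β - a) := ha
      _ = v (σ (β - a)) := (hσv _).symm
      _ = v (β + a) := by
        rw [map_sub, hneg, hσK a haK, show -β - a = -(β + a) by ring, val_neg hvmul hv1]
  exact hclose.not_ge (val_add_le_of_val_lt_val_sub hvmul hvadd hv2 ha)

/-- A square root `β` of an element of `K` that is well-approximated by an element of `K`
(i.e. `v(β - a) > v(a)` for some `a ∈ K`) is fixed by every value-preserving field
automorphism of `F` over `K`, provided `v(2) = 0`. -/
theorem fixed_of_approx {F Γ : Type*} [Field F] [AddCommGroup Γ] [LinearOrder Γ] [IsOrderedAddMonoid Γ]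
    (v : F → WithTop Γ)
    (hv0 : ∀ x : F, v x = ⊤ ↔ x = 0)
    (hvmul : ∀ x y : F, v (x * y) = v x + v y)
    (hvadd : ∀ x y : F, min (v x) (v y) ≤ v (x + y))
    (hv2 : v 2 = 0)
    (K : Subfield F) (β : F) (hβ : β ^ 2 ∈ K)
    (σ : F ≃+* F) (hσK : ∀ x ∈ K, σ x = x)
    (hσv : ∀ y : F, v (σ y) = v y)
    (happrox : ∃ a ∈ K, v a < v (β - a)) :
    σ β = β :=
  fixed_of_approx_general v hvmul hvadd hv2 K β hβ σ hσK hσv happrox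
end

section
/- Let θ ∈ K̄ be algebraic of degree n over K, and let [A₀, A₁, …, A_r = {θ}] be a finite sequence of nonempty subsets of K̄ such that: each A_ℓ has common degree m_ℓ := deg_K A_ℓ over K with 1 = m₀ < m₁ < ⋯ < m_r = n; (OS0) for every 0 ≤ ℓ < r and every b ∈ K̄ with deg_K b < m_{ℓ+1}, there exists a ∈ A_ℓ with v(θ − b) ≤ v(θ − a); and (OS3) for every 0 ≤ ℓ < r, a ∈ A_ℓ and b ∈ A_{ℓ+1}, one has v(θ − a) < v(θ − b). Then for every 0 ≤ ℓ < r, m_{ℓ+1} is the least integer m > m_ℓ such that there exists ε ∈ D_m(θ) with ε > γ for all γ ∈ D_{m_ℓ}(θ). (That is, the degree sequence of any Okutsu sequence of θ equals the canonical sequence of minimal degrees of the distances of θ.) -/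
section OkutsuStep

variable {K Kbar Γ : Type*} [Field K] [Field Kbar] [Algebra K Kbar]
  [AddCommGroup Γ] [LinearOrder Γ] [IsOrderedAddMonoid Γ]
  {v : Kbar → WithTop Γ} {θ : Kbar} {A : Set Kbar} {m₁ : ℕ}

theorem distSet_subset_Iio_of_okutsu_step {b : Kbar}
    (hOS0 : ∀ c : Kbar, (minpoly K c).natDegree < m₁ → ∃ a ∈ A, v (θ - c) ≤ v (θ - a))
    (hOS3 : ∀ a ∈ A, v (θ - a) < v (θ - b)) {m : ℕ} (hm : m < m₁) :
    distSet K v θ m ⊆ Set.Iio (v (θ - b)) := by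
  rintro γ ⟨c, hc, rfl⟩
  obtain ⟨a, ha, hle⟩ := hOS0 c (hc ▸ hm)
  exact hle.trans_lt (hOS3 a ha)

theorem le_of_mem_distSet_of_forall_lt {m₀ : ℕ}
    (hdeg : ∀ a ∈ A, (minpoly K a).natDegree = m₀)
    (hOS0 : ∀ c : Kbar, (minpoly K c).natDegree < m₁ → ∃ a ∈ A, v (θ - c) ≤ v (θ - a))
    {m' : ℕ} {ε : WithTop Γ} (hε : ε ∈ distSet K v θ m')
    (hgt : ∀ γ ∈ distSet K v θ m₀, γ < ε) :
    m₁ ≤ m' := by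
  obtain ⟨c, hc, rfl⟩ := hε
  by_contra! hlt
  obtain ⟨a, ha, hle⟩ := hOS0 c (hc ▸ hlt)
  exact hle.not_gt (hgt _ ⟨a, hdeg a ha, rfl⟩)

end OkutsuStep

theorem okutsu_degree_sequence_general {K Kbar Γ : Type*} [Field K] [Field Kbar] [Algebra K Kbar]
    [AddCommGroup Γ] [LinearOrder Γ] [IsOrderedAddMonoid Γ]
    (v : Kbar → WithTop Γ)
    (θ : Kbar)
    (r : ℕ) (A : Fin (r + 1) → Set Kbar) (m : Fin (r + 1) → ℕ)
    (hne : ∀ ℓ, (A ℓ).Nonempty)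
    (hdeg : ∀ ℓ, ∀ a ∈ A ℓ, (minpoly K a).natDegree = m ℓ)
    (hmono : StrictMono m)
    (hOS0 : ∀ (ℓ : Fin r) (b : Kbar), (minpoly K b).natDegree < m ℓ.succ →
      ∃ a ∈ A ℓ.castSucc, v (θ - b) ≤ v (θ - a))
    (hOS3 : ∀ ℓ : Fin r, ∀ a ∈ A ℓ.castSucc, ∀ b ∈ A ℓ.succ, v (θ - a) < v (θ - b)) :
    ∀ ℓ : Fin r, IsLeast
      {m' : ℕ | m ℓ.castSucc < m' ∧
        ∃ ε ∈ distSet K v θ m', ∀ γ ∈ distSet K v θ (m ℓ.castSucc), γ < ε}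
      (m ℓ.succ) := by
  intro ℓ
  have hstep : m ℓ.castSucc < m ℓ.succ := hmono Fin.castSucc_lt_succ
  obtain ⟨b, hb⟩ := hne ℓ.succ
  refine ⟨⟨hstep, v (θ - b), ⟨b, hdeg ℓ.succ b hb, rfl⟩, fun γ hγ => ?_⟩, ?_⟩
  · exact distSet_subset_Iio_of_okutsu_step (hOS0 ℓ) (fun a ha => hOS3 ℓ a ha b hb) hstep hγ
  · rintro m' ⟨-, ε, hε, hgt⟩
    exact le_of_mem_distSet_of_forall_lt (hdeg ℓ.castSucc) (hOS0 ℓ) hε hgt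

/-- The degree sequence of any Okutsu sequence of `θ` coincides with the canonical sequence
of minimal degrees of the distances of `θ`: for each `ℓ < r`, `m_{ℓ+1}` is the least integer
`m > m_ℓ` such that some `ε ∈ D_m(θ)` exceeds every `γ ∈ D_{m_ℓ}(θ)`. -/
theorem okutsu_degree_sequence {K Kbar Γ : Type*} [Field K] [Field Kbar] [Algebra K Kbar]
    [IsAlgClosure K Kbar] [AddCommGroup Γ] [LinearOrder Γ] [IsOrderedAddMonoid Γ]
    (v : Kbar → WithTop Γ)
    (hv0 : ∀ x : Kbar, v x = ⊤ ↔ x = 0)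
    (hvmul : ∀ x y : Kbar, v (x * y) = v x + v y)
    (hvadd : ∀ x y : Kbar, min (v x) (v y) ≤ v (x + y))
    (θ : Kbar) (n : ℕ) (hn : (minpoly K θ).natDegree = n)
    (r : ℕ) (A : Fin (r + 1) → Set Kbar) (m : Fin (r + 1) → ℕ)
    (hne : ∀ ℓ, (A ℓ).Nonempty)
    (hlast : A (Fin.last r) = {θ})
    (hdeg : ∀ ℓ, ∀ a ∈ A ℓ, (minpoly K a).natDegree = m ℓ)
    (hm0 : m 0 = 1) (hmlast : m (Fin.last r) = n)
    (hmono : StrictMono m)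
    (hOS0 : ∀ (ℓ : Fin r) (b : Kbar), (minpoly K b).natDegree < m ℓ.succ →
      ∃ a ∈ A ℓ.castSucc, v (θ - b) ≤ v (θ - a))
    (hOS3 : ∀ ℓ : Fin r, ∀ a ∈ A ℓ.castSucc, ∀ b ∈ A ℓ.succ, v (θ - a) < v (θ - b)) :
    ∀ ℓ : Fin r, IsLeast
      {m' : ℕ | m ℓ.castSucc < m' ∧
        ∃ ε ∈ distSet K v θ m', ∀ γ ∈ distSet K v θ (m ℓ.castSucc), γ < ε}
      (m ℓ.succ) :=
  okutsu_degree_sequence_general v θ r A m hne hdeg hmono hOS0 hOS3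
end

section
/- Every algebraic element θ ∈ K̄ of degree n ≥ 1 over K admits an Okutsu sequence: there exist r ≥ 0 and nonempty subsets A₀, A₁, …, A_r of K̄ with A_r = {θ}, each A_ℓ of common degree m_ℓ over K with 1 = m₀ < m₁ < ⋯ < m_r = n, satisfying: (OS0) for every 0 ≤ ℓ < r and every b ∈ K̄ with deg_K b < m_{ℓ+1}, there exists a ∈ A_ℓ with v(θ − b) ≤ v(θ − a); (OS1) A_ℓ is a singleton whenever D_{m_ℓ}(θ) has a maximal element; (OS2) if D_{m_ℓ}(θ) has no maximal element, then the map a ↦ v(θ − a) is injective on A_ℓ and its image {v(θ − a) : a ∈ A_ℓ} is a well-ordered subset of Γ; and (OS3) for every 0 ≤ ℓ < r, a ∈ A_ℓ and b ∈ A_{ℓ+1}, one has v(θ − a) < v(θ − b). -/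
open Set

section

variable {X α : Type*} [LinearOrder α]

theorem Set.exists_isWF_isCofinalFor (s : Set α) : ∃ t ⊆ s, t.IsWF ∧ IsCofinalFor s t := by
  -- take the records of `s` with respect to a well-ordering of `α`
  let r := WellOrderingRel (α := α)
  have hr : WellFounded r := WellOrderingRel.isWellOrder.wf
  refine ⟨{x ∈ s | ∀ y ∈ s, r y x → y < x}, sep_subset _ _, ?_, ?_⟩
  · refine Set.WellFoundedOn.mono' (r := r) (fun a ha b hb hab => ?_) hr.wellFoundedOn
    rcases trichotomous_of r a b with h | rfl | h
    · exact h
    · exact absurd hab (lt_irrefl a)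
    · exact absurd (ha.2 b hb.1 h) hab.not_gt
  · intro x hx
    have hne : {y ∈ s | x ≤ y}.Nonempty := ⟨x, hx, le_rfl⟩
    obtain ⟨hmin_s, hx_le⟩ := hr.min_mem _ hne
    refine ⟨hr.min _ hne, ⟨hmin_s, fun z hz hzr => ?_⟩, hx_le⟩
    by_contra! hle
    exact hr.not_lt_min {y ∈ s | x ≤ y} ⟨hz, hx_le.trans hle⟩ hzr

theorem Set.exists_subset_injOn_isWF_isCofinalFor (s : Set X) (w : X → α) :
    ∃ A ⊆ s, InjOn w A ∧ (w '' A).IsWF ∧ IsCofinalFor (w '' s) (w '' A) ∧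
      ((∃ δ, IsGreatest (w '' s) δ) → A.Subsingleton) := by
  by_cases hmax : ∃ δ, IsGreatest (w '' s) δ
  · obtain ⟨_, ⟨a, ha, rfl⟩, hδ⟩ := hmax
    refine ⟨{a}, singleton_subset_iff.2 ha, injOn_singleton _ _, ?_, fun δ hδs => ?_,
      fun _ => subsingleton_singleton⟩
    · rw [image_singleton]
      exact isWF_singleton
    · exact ⟨w a, mem_image_of_mem w rfl, hδ hδs⟩
  · obtain ⟨t, hts, htwf, hst⟩ := (w '' s).exists_isWF_isCofinalFor
    obtain ⟨A, hAs, hinj, rfl⟩ := SurjOn.exists_subset_injOn_image_eq hts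
    exact ⟨A, hAs, hinj, htwf, hst, fun h => absurd h hmax⟩

theorem Set.Finite.exists_strictMono_fin_range_eq {s : Set α} (hs : s.Finite) (hne : s.Nonempty) :
    ∃ (r : ℕ) (f : Fin (r + 1) → α), StrictMono f ∧ range f = s := by
  obtain ⟨r, hr⟩ := Nat.exists_eq_succ_of_ne_zero ((hs.toFinset_nonempty.2 hne).card_pos.ne')
  exact ⟨r, hs.toFinset.orderEmbOfFin hr, (hs.toFinset.orderEmbOfFin hr).strictMono, by simp⟩

theorem StrictMono.succ_le_of_castSucc_lt {r : ℕ} {f : Fin (r + 1) → α} (hf : StrictMono f)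
    {ℓ : Fin r} {j : α} (hj : j ∈ range f) (hlt : f ℓ.castSucc < j) : f ℓ.succ ≤ j := by
  obtain ⟨k, rfl⟩ := hj
  exact hf.monotone (Fin.castSucc_lt_iff_succ_le.1 (hf.lt_iff_lt.1 hlt))

namespace Okutsu

variable (deg : X → ℕ) (w : X → α)

def distances (m : ℕ) : Set α := {δ | ∃ b, deg b = m ∧ δ = w b}

def jumpWitnesses (m : ℕ) : Set X := {b | deg b = m ∧ ∀ b', deg b' < m → w b' < w b}

def jumpDegrees : Set ℕ := {m | (jumpWitnesses deg w m).Nonempty}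

noncomputable def level (m : ℕ) : Set X :=
  (exists_subset_injOn_isWF_isCofinalFor (jumpWitnesses deg w m) w).choose

variable {deg w} {m : ℕ}

theorem exists_mem_jumpWitnesses_le (hm : m ∈ jumpDegrees deg w) {d : ℕ}
    (hgap : ∀ j ∈ jumpDegrees deg w, m < j → d < j) (b : X) (hb : deg b ≤ d) :
    ∃ c ∈ jumpWitnesses deg w m, w b ≤ w c := by
  obtain ⟨c, hc⟩ := hm
  induction hk : deg b using Nat.strong_induction_on generalizing b with | _ k ih =>
  rcases lt_trichotomy k m with hlt | rfl | hgt
  · exact ⟨c, hc, (hc.2 b (hk ▸ hlt)).le⟩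
  · rcases le_or_gt (w b) (w c) with hbc | hcb
    · exact ⟨c, hc, hbc⟩
    · exact ⟨b, ⟨hk, fun b' hb' => (hc.2 b' hb').trans hcb⟩, le_rfl⟩
  · have hb_not : b ∉ jumpWitnesses deg w k := fun hbk => (hgap k ⟨b, hbk⟩ hgt).not_ge (hk ▸ hb)
    simp only [jumpWitnesses, mem_ofPred_eq, hk, true_and, not_forall, not_lt] at hb_not
    obtain ⟨b', hb'k, hbb'⟩ := hb_not
    obtain ⟨c', hc', hb'c'⟩ := ih _ hb'k b' (by omega) rfl
    exact ⟨c', hc', hbb'.trans hb'c'⟩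

theorem isLeast_jumpDegrees (hdeg : ∀ b, 1 ≤ deg b) (x : X) (hx : deg x = 1) :
    IsLeast (jumpDegrees deg w) 1 :=
  ⟨⟨x, hx, fun b hb => absurd hb (hdeg b).not_gt⟩, fun _ ⟨b, hb, _⟩ => hb ▸ hdeg b⟩

theorem level_subset : level deg w m ⊆ jumpWitnesses deg w m :=
  (exists_subset_injOn_isWF_isCofinalFor (jumpWitnesses deg w m) w).choose_spec.1

theorem injOn_level : InjOn w (level deg w m) :=
  (exists_subset_injOn_isWF_isCofinalFor (jumpWitnesses deg w m) w).choose_spec.2.1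

theorem isWF_image_level : (w '' level deg w m).IsWF :=
  (exists_subset_injOn_isWF_isCofinalFor (jumpWitnesses deg w m) w).choose_spec.2.2.1

theorem isCofinalFor_level : IsCofinalFor (w '' jumpWitnesses deg w m) (w '' level deg w m) :=
  (exists_subset_injOn_isWF_isCofinalFor (jumpWitnesses deg w m) w).choose_spec.2.2.2.1

theorem level_subsingleton (h : ∃ δ, IsGreatest (w '' jumpWitnesses deg w m) δ) :
    (level deg w m).Subsingleton :=
  (exists_subset_injOn_isWF_isCofinalFor (jumpWitnesses deg w m) w).choose_spec.2.2.2.2 h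

theorem level_nonempty (hm : m ∈ jumpDegrees deg w) : (level deg w m).Nonempty :=
  (isCofinalFor_level.nonempty (hm.image w)).of_image

theorem exists_mem_level_le (hm : m ∈ jumpDegrees deg w) {d : ℕ}
    (hgap : ∀ j ∈ jumpDegrees deg w, m < j → d < j) {b : X} (hb : deg b ≤ d) :
    ∃ a ∈ level deg w m, w b ≤ w a := by
  obtain ⟨c, hc, hbc⟩ := exists_mem_jumpWitnesses_le hm hgap b hb
  obtain ⟨_, ⟨a, ha, rfl⟩, hca⟩ := isCofinalFor_level (mem_image_of_mem w hc)
  exact ⟨a, ha, hbc.trans hca⟩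

theorem exists_level_eq_singleton (hm : m ∈ jumpDegrees deg w)
    (h : ∃ δ, IsGreatest (distances deg w m) δ) : ∃ a, level deg w m = {a} := by
  obtain ⟨_, ⟨b, hb, rfl⟩, hδ⟩ := h
  obtain ⟨c, hc, hbc⟩ := exists_mem_jumpWitnesses_le hm (fun _ _ => id) b hb.le
  have hmax : IsGreatest (w '' jumpWitnesses deg w m) (w c) :=
    ⟨mem_image_of_mem w hc, by rintro _ ⟨c', hc', rfl⟩; exact (hδ ⟨c', hc'.1, rfl⟩).trans hbc⟩
  obtain ⟨a, ha⟩ := level_nonempty hm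
  exact ⟨a, (level_subsingleton ⟨_, hmax⟩).eq_singleton_of_mem ha⟩

theorem lt_of_mem_level {m' : ℕ} (hlt : m < m') {a b : X} (ha : a ∈ level deg w m)
    (hb : b ∈ level deg w m') : w a < w b :=
  (level_subset hb).2 a ((level_subset ha).1 ▸ hlt)

section Target

variable {θ : X} (hθ : ∀ b, b ≠ θ → w b < w θ)
include hθ

theorem le_of_forall_ne_lt (b : X) : w b ≤ w θ := by
  rcases eq_or_ne b θ with rfl | hb
  · exact le_rfl
  · exact (hθ b hb).le

theorem mem_jumpWitnesses_deg : θ ∈ jumpWitnesses deg w (deg θ) :=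
  ⟨rfl, fun b hb => hθ b fun h => (h ▸ hb).false⟩

theorem isGreatest_jumpDegrees : IsGreatest (jumpDegrees deg w) (deg θ) :=
  ⟨⟨θ, mem_jumpWitnesses_deg hθ⟩, fun _ ⟨b, hb, hbθ⟩ =>
    not_lt.1 fun hlt => (hbθ θ (hb ▸ hlt)).not_ge (le_of_forall_ne_lt hθ b)⟩

theorem level_deg_eq_singleton : level deg w (deg θ) = {θ} := by
  have hθmem : θ ∈ jumpWitnesses deg w (deg θ) := mem_jumpWitnesses_deg hθ
  have hmax : IsGreatest (w '' jumpWitnesses deg w (deg θ)) (w θ) :=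
    ⟨mem_image_of_mem w hθmem, by rintro _ ⟨b, -, rfl⟩; exact le_of_forall_ne_lt hθ b⟩
  obtain ⟨_, ⟨a, ha, rfl⟩, hθa⟩ := isCofinalFor_level (mem_image_of_mem w hθmem)
  obtain rfl : a = θ := by_contra fun haθ => (hθ a haθ).not_ge hθa
  exact (level_subsingleton ⟨_, hmax⟩).eq_singleton_of_mem ha

end Target

end Okutsu

end

theorem exists_okutsu_sequence_general {K Kbar Γ : Type*} [Field K] [Field Kbar] [Algebra K Kbar]
    [IsAlgClosure K Kbar] [AddCommGroup Γ] [LinearOrder Γ] [IsOrderedAddMonoid Γ]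
    (v : Kbar → WithTop Γ)
    (hv0 : ∀ x : Kbar, v x = ⊤ ↔ x = 0)
    (θ : Kbar) (n : ℕ) (hn : (minpoly K θ).natDegree = n) :
    ∃ (r : ℕ) (A : Fin (r + 1) → Set Kbar) (m : Fin (r + 1) → ℕ),
      (∀ ℓ, (A ℓ).Nonempty) ∧
      A (Fin.last r) = {θ} ∧
      (∀ ℓ, ∀ a ∈ A ℓ, (minpoly K a).natDegree = m ℓ) ∧
      m 0 = 1 ∧ m (Fin.last r) = n ∧ StrictMono m ∧
      -- (OS0)
      (∀ (ℓ : Fin r) (b : Kbar), (minpoly K b).natDegree < m ℓ.succ →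
        ∃ a ∈ A ℓ.castSucc, v (θ - b) ≤ v (θ - a)) ∧
      -- (OS1)
      (∀ ℓ : Fin r, (∃ δ, IsGreatest (distSet K v θ (m ℓ.castSucc)) δ) →
        ∃ a : Kbar, A ℓ.castSucc = {a}) ∧
      -- (OS2)
      (∀ ℓ : Fin r, ¬(∃ δ, IsGreatest (distSet K v θ (m ℓ.castSucc)) δ) →
        Set.InjOn (fun a => v (θ - a)) (A ℓ.castSucc) ∧
          ((fun a => v (θ - a)) '' A ℓ.castSucc).IsWF) ∧
      -- (OS3)
      (∀ ℓ : Fin r, ∀ a ∈ A ℓ.castSucc, ∀ b ∈ A ℓ.succ, v (θ - a) < v (θ - b)) := by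
  let deg : Kbar → ℕ := fun b => (minpoly K b).natDegree
  let w : Kbar → WithTop Γ := fun b => v (θ - b)
  have hθ : ∀ b, b ≠ θ → w b < w θ := fun b hb => by
    have hθθ : w θ = ⊤ := (hv0 _).2 (sub_self θ)
    simpa [hθθ, w, lt_top_iff_ne_top, hv0, sub_eq_zero] using hb.symm
  have hJ₁ : IsLeast (Okutsu.jumpDegrees deg w) 1 := Okutsu.isLeast_jumpDegrees
    (fun b => minpoly.natDegree_pos (Algebra.IsIntegral.isIntegral b)) 0 (by simp [deg])
  have hJₙ : IsGreatest (Okutsu.jumpDegrees deg w) n := hn ▸ Okutsu.isGreatest_jumpDegrees hθ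
  obtain ⟨r, m, hm, hrange⟩ := hJₙ.bddAbove.finite.exists_strictMono_fin_range_eq ⟨1, hJ₁.1⟩
  have hmJ : ∀ ℓ, m ℓ ∈ Okutsu.jumpDegrees deg w := fun ℓ => hrange.subset (mem_range_self ℓ)
  obtain ⟨k₁, hk₁⟩ : 1 ∈ range m := hrange.symm.subset hJ₁.1
  obtain ⟨kₙ, hkₙ⟩ : n ∈ range m := hrange.symm.subset hJₙ.1
  have hm0 : m 0 = 1 := le_antisymm ((hm.monotone (Fin.zero_le k₁)).trans_eq hk₁) (hJ₁.2 (hmJ 0))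
  have hmr : m (Fin.last r) = n :=
    le_antisymm (hJₙ.2 (hmJ _)) (hkₙ.symm.trans_le (hm.monotone (Fin.le_last kₙ)))
  refine ⟨r, fun ℓ => Okutsu.level deg w (m ℓ), m, fun ℓ => Okutsu.level_nonempty (hmJ ℓ), ?_,
    fun ℓ a ha => (Okutsu.level_subset ha).1, hm0, hmr, hm, fun ℓ b hb => ?_,
    fun ℓ => Okutsu.exists_level_eq_singleton (hmJ _),
    fun ℓ _ => ⟨Okutsu.injOn_level, Okutsu.isWF_image_level⟩,
    fun ℓ a ha b hb => Okutsu.lt_of_mem_level (w := w) (hm Fin.castSucc_lt_succ) ha hb⟩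
  · simpa only [hmr, ← hn] using Okutsu.level_deg_eq_singleton hθ
  · exact Okutsu.exists_mem_level_le (hmJ _)
      (fun j hj hlt => hb.trans_le (hm.succ_le_of_castSucc_lt (hrange.symm.subset hj) hlt)) le_rfl

/-- Every algebraic element `θ ∈ K̄` of degree `n ≥ 1` over `K` admits an Okutsu sequence
`[A₀, …, A_r = {θ}]` satisfying (OS0), (OS1), (OS2) and (OS3). -/
theorem exists_okutsu_sequence {K Kbar Γ : Type*} [Field K] [Field Kbar] [Algebra K Kbar]
    [IsAlgClosure K Kbar] [AddCommGroup Γ] [LinearOrder Γ] [IsOrderedAddMonoid Γ]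
    (v : Kbar → WithTop Γ)
    (hv0 : ∀ x : Kbar, v x = ⊤ ↔ x = 0)
    (hvmul : ∀ x y : Kbar, v (x * y) = v x + v y)
    (hvadd : ∀ x y : Kbar, min (v x) (v y) ≤ v (x + y))
    (θ : Kbar) (n : ℕ) (hn : (minpoly K θ).natDegree = n) (hn1 : 1 ≤ n) :
    ∃ (r : ℕ) (A : Fin (r + 1) → Set Kbar) (m : Fin (r + 1) → ℕ),
      (∀ ℓ, (A ℓ).Nonempty) ∧
      A (Fin.last r) = {θ} ∧
      (∀ ℓ, ∀ a ∈ A ℓ, (minpoly K a).natDegree = m ℓ) ∧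
      m 0 = 1 ∧ m (Fin.last r) = n ∧ StrictMono m ∧
      -- (OS0)
      (∀ (ℓ : Fin r) (b : Kbar), (minpoly K b).natDegree < m ℓ.succ →
        ∃ a ∈ A ℓ.castSucc, v (θ - b) ≤ v (θ - a)) ∧
      -- (OS1)
      (∀ ℓ : Fin r, (∃ δ, IsGreatest (distSet K v θ (m ℓ.castSucc)) δ) →
        ∃ a : Kbar, A ℓ.castSucc = {a}) ∧
      -- (OS2)
      (∀ ℓ : Fin r, ¬(∃ δ, IsGreatest (distSet K v θ (m ℓ.castSucc)) δ) →
        Set.InjOn (fun a => v (θ - a)) (A ℓ.castSucc) ∧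
          ((fun a => v (θ - a)) '' A ℓ.castSucc).IsWF) ∧
      -- (OS3)
      (∀ ℓ : Fin r, ∀ a ∈ A ℓ.castSucc, ∀ b ∈ A ℓ.succ, v (θ - a) < v (θ - b)) :=
  exists_okutsu_sequence_general v hv0 θ n hn
end
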